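/- arXiv:1303.7426 — 2 statements merged into one kernel-verified Lean document; each statement's English description precedes it below -/
import Mathlib

section
/- Let D be a self-adjoint operator on H and a ∈ B(H). Then a is strongly D-differentiable (i.e., t ↦ α_t(a) is norm differentiable at 0) if and only if a is weakly D-differentiable and the map t ↦ α_t(wD(a)) is norm continuous. -/
/-!
Conjugation `α_t` is a one-parameter group of isometries of `B(H)`. If `t ↦ α_t(a)` is norm
differentiable at `0` with derivative `d`, then `α_t(d)` is the uniform limit of the difference
quotients `(α_{t+s}(a) - α_t(a))/s`, which are continuous in `t`; differentiating
`⟨η, α_t(a)ξ⟩ = ⟨U(-t)η, a U(-t)ξ⟩` at `0` for `ξ, η ∈ dom D` identifies `-i d` as the weak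
derivative. Conversely, if `b = wD(a)` then `d/dt ⟨η, α_t(a)ξ⟩ = ⟨η, α_t(ib)ξ⟩` on the dense
domain, and since `t ↦ α_t(ib)` is norm continuous this integrates to the norm identity
`α_t(a) = a + ∫₀ᵗ α_s(ib) ds`.
-/

open Complex Filter Topology MeasureTheory
open scoped Topology

local notation "⟪" x ", " y "⟫" => @inner ℂ _ _ x y

variable {H : Type*} [NormedAddCommGroup H] [InnerProductSpace ℂ H] [CompleteSpace H]

/-- `b` is the bounded operator implementing the commutator form
`(ξ, η) ↦ ⟨aξ, Dη⟩ − ⟨aDξ, η⟩` on `dom D × dom D`; i.e. `a` is weakly `D`-differentiable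
with derivative `wD(a) = b`. -/
def IsWeakDeriv (D : H →ₗ.[ℂ] H) (a b : H →L[ℂ] H) : Prop :=
  ∀ ξ η : D.domain, ⟪b (ξ : H), (η : H)⟫ = ⟪a (ξ : H), D η⟫ - ⟪a (D ξ), (η : H)⟫

/-- `conjAd U t a = U t ∘ a ∘ U (−t)`, i.e. `α_t(a) = e^{itD} a e^{-itD}`. -/
noncomputable def conjAd (U : ℝ → H →L[ℂ] H) (t : ℝ) (a : H →L[ℂ] H) : H →L[ℂ] H :=
  (U t).comp (a.comp (U (-t)))

/-- `U` is the strongly continuous one-parameter unitary group `t ↦ e^{itD}`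
generated by the self-adjoint operator `D` (Stone's theorem characterization). -/
structure IsStoneGroupOf (D : H →ₗ.[ℂ] H) (U : ℝ → H →L[ℂ] H) : Prop where
  map_zero : U 0 = 1
  map_add : ∀ s t : ℝ, U (s + t) = (U s).comp (U t)
  isometry : ∀ (t : ℝ) (ξ : H), ‖U t ξ‖ = ‖ξ‖
  hasDerivAt : ∀ ξ : D.domain, HasDerivAt (fun t : ℝ => U t (ξ : H)) (Complex.I • D ξ) 0
  mem_domain : ∀ ξ v : H, HasDerivAt (fun t : ℝ => U t ξ) v 0 → ξ ∈ D.domain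

section IsometricFlow

variable {E : Type*} [NormedAddCommGroup E] [NormedSpace ℝ E] {α : ℝ → E →L[ℝ] E}

theorem continuous_orbit_of_continuousAt_zero (hα : ∀ s t x, α (s + t) x = α s (α t x))
    {x : E} (hx : ContinuousAt (fun t => α t x) 0) : Continuous fun t => α t x := by
  refine continuous_iff_continuousAt.2 fun t₀ => ?_
  have hshift : Tendsto (fun t => t - t₀) (𝓝 t₀) (𝓝 0) := by
    simpa using (continuous_sub_right t₀).tendsto t₀
  simpa [ContinuousAt, Function.comp_def, ← hα] using
    ((α t₀).continuous.tendsto _).comp (hx.tendsto.comp hshift)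

theorem continuous_orbit_of_hasDerivAt_zero (hα : ∀ s t x, α (s + t) x = α s (α t x))
    (hiso : ∀ t x, ‖α t x‖ = ‖x‖) {x d : E} (hd : HasDerivAt (fun t => α t x) d 0) :
    Continuous fun t => α t d := by
  have hx : Continuous fun t => α t x :=
    continuous_orbit_of_continuousAt_zero hα hd.continuousAt
  refine TendstoUniformly.continuous (p := 𝓝[≠] 0)
    (F := fun s t => α t (slope (fun t => α t x) 0 s)) ?_
    (Eventually.of_forall fun s => ?_).frequently
  · refine Metric.tendstoUniformly_iff.2 fun ε hε => ?_
    filter_upwards [Metric.tendsto_nhds.1 (hasDerivAt_iff_tendsto_slope.1 hd) ε hε] with s hs t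
    rwa [dist_eq_norm, ← map_sub, hiso, ← dist_eq_norm, dist_comm]
  · have hquot : (fun t => α t (slope (fun t => α t x) 0 s))
        = fun t => s⁻¹ • (α (t + s) x - α (t + 0) x) := by
      funext t
      simp only [slope_def_module, sub_zero, map_smul, map_sub, hα]
    rw [hquot]
    exact ((hx.comp (continuous_add_const s)).sub (hx.comp (continuous_add_const 0))).const_smul _

end IsometricFlow

section WeakDerivative

variable {E : Type*} [NormedAddCommGroup E] [InnerProductSpace ℂ E]

theorem ContinuousLinearMap.eq_of_inner_apply_eq {S : Set E} (hS : Dense S) {T T' : E →L[ℂ] E}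
    (h : ∀ ξ ∈ S, ∀ η ∈ S, ⟪η, T ξ⟫ = ⟪η, T' ξ⟫) : T = T' :=
  coeFn_injective <| Continuous.ext_on hS T.continuous T'.continuous fun ξ hξ =>
    hS.eq_of_inner_right ℂ (h ξ hξ)

theorem HasDerivAt.inner_apply {F : ℝ → E →L[ℂ] E} {d : E →L[ℂ] E} {t : ℝ}
    (hF : HasDerivAt F d t) (ξ η : E) : HasDerivAt (fun t => ⟪η, F t ξ⟫) ⟪η, d ξ⟫ t :=
  (((innerSL ℂ η).comp (ContinuousLinearMap.apply ℂ E ξ)).restrictScalars ℝ).hasFDerivAt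
    |>.comp_hasDerivAt t hF

theorem hasDerivAt_of_hasDerivAt_inner_apply [CompleteSpace E] {S : Set E} (hS : Dense S)
    {F f : ℝ → E →L[ℂ] E} (hf : Continuous f)
    (hF : ∀ ξ ∈ S, ∀ η ∈ S, ∀ s, HasDerivAt (fun t => ⟪η, F t ξ⟫) ⟪η, f s ξ⟫ s) (t : ℝ) :
    HasDerivAt F (f t) t := by
  have hFTC : ∀ r, F r = F 0 + ∫ s in (0)..r, f s := by
    intro r
    refine ContinuousLinearMap.eq_of_inner_apply_eq hS fun ξ hξ η hη => ?_
    let L : (E →L[ℂ] E) →L[ℂ] ℂ := (innerSL ℂ η).comp (ContinuousLinearMap.apply ℂ E ξ)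
    have hLf : Continuous fun s => L (f s) := L.continuous.comp hf
    change L (F r) = L (F 0 + ∫ s in (0)..r, f s)
    rw [map_add, ← L.intervalIntegral_comp_comm (hf.intervalIntegrable 0 r),
      intervalIntegral.integral_eq_sub_of_hasDerivAt (f := fun s => L (F s))
        (f' := fun s => L (f s)) (fun s _ => hF ξ hξ η hη s) (hLf.intervalIntegrable 0 r)]
    ring
  exact (((hf.integral_hasStrictDerivAt 0 t).hasDerivAt).const_add (F 0)).congr_of_eventuallyEq
    (Eventually.of_forall hFTC)

end WeakDerivative

section StoneGroup

variable {H : Type*} [NormedAddCommGroup H] [InnerProductSpace ℂ H]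

theorem isWeakDeriv_iff {D : H →ₗ.[ℂ] H} {a b : H →L[ℂ] H} :
    IsWeakDeriv D a b ↔ ∀ ξ η : D.domain, ⟪(η : H), b ξ⟫ = ⟪D η, a ξ⟫ - ⟪(η : H), a (D ξ)⟫ := by
  refine forall₂_congr fun ξ η => ?_
  rw [← inner_conj_symm (b ξ), ← inner_conj_symm (a ξ), ← inner_conj_symm (a (D ξ)), ← map_sub,
    (RingHom.injective _).eq_iff]

noncomputable def conjAdL (U : ℝ → H →L[ℂ] H) (t : ℝ) : (H →L[ℂ] H) →L[ℂ] (H →L[ℂ] H) :=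
  (ContinuousLinearMap.compL ℂ H H H (U t)).comp
    ((ContinuousLinearMap.compL ℂ H H H).flip (U (-t)))

theorem conjAd_smul (U : ℝ → H →L[ℂ] H) (t : ℝ) (c : ℂ) (a : H →L[ℂ] H) :
    conjAd U t (c • a) = c • conjAd U t a :=
  map_smul (conjAdL U t) c a

theorem conjAd_neg (U : ℝ → H →L[ℂ] H) (t : ℝ) (a : H →L[ℂ] H) :
    conjAd U t (-a) = -conjAd U t a :=
  map_neg (conjAdL U t) a

namespace IsStoneGroupOf

variable {D : H →ₗ.[ℂ] H} {U : ℝ → H →L[ℂ] H} (hU : IsStoneGroupOf D U)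
include hU

theorem add_apply (s t : ℝ) (x : H) : U (s + t) x = U s (U t x) := by
  rw [hU.map_add]; rfl

theorem apply_neg_apply (t : ℝ) (x : H) : U t (U (-t) x) = x := by
  rw [← hU.add_apply, add_neg_cancel, hU.map_zero]
  rfl

theorem inner_apply_right (t : ℝ) (x y : H) : ⟪x, U t y⟫ = ⟪U (-t) x, y⟫ := by
  conv_lhs => rw [← hU.apply_neg_apply t x]
  exact (⟨(U t : H →ₗ[ℂ] H), hU.isometry t⟩ : H →ₗᵢ[ℂ] H).inner_map_map _ _

theorem exists_domain_apply (t : ℝ) (ξ : D.domain) :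
    ∃ ξ' : D.domain, (ξ' : H) = U t ξ ∧ D ξ' = U t (D ξ) := by
  have hcomm : (fun s => U s (U t ξ)) = fun s => U t (U s ξ) := by
    funext s
    rw [← hU.add_apply, ← hU.add_apply, add_comm]
  have hderiv : HasDerivAt (fun s => U s (U t ξ)) (I • U t (D ξ)) 0 := by
    rw [hcomm, ← map_smul]
    exact ((U t).restrictScalars ℝ).hasFDerivAt.comp_hasDerivAt 0 (hU.hasDerivAt ξ)
  refine ⟨⟨U t ξ, hU.mem_domain _ _ hderiv⟩, rfl, ?_⟩
  exact smul_right_injective H I_ne_zero ((hU.hasDerivAt _).unique hderiv)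

theorem conjAd_zero (a : H →L[ℂ] H) : conjAd U 0 a = a := by
  ext ξ
  simp [conjAd, hU.map_zero]

theorem conjAd_add (s t : ℝ) (a : H →L[ℂ] H) :
    conjAd U (s + t) a = conjAd U s (conjAd U t a) := by
  ext ξ
  simp only [conjAd, ContinuousLinearMap.comp_apply, hU.add_apply, neg_add_rev]

theorem norm_conjAd (t : ℝ) (a : H →L[ℂ] H) : ‖conjAd U t a‖ = ‖a‖ := by
  have hle : ∀ t (a : H →L[ℂ] H), ‖conjAd U t a‖ ≤ ‖a‖ := fun t a =>
    ContinuousLinearMap.opNorm_le_bound _ (norm_nonneg a) fun ξ => by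
      simpa only [conjAd, ContinuousLinearMap.comp_apply, hU.isometry] using
        (a.le_opNorm _).trans_eq (by rw [hU.isometry])
  refine (hle t a).antisymm ?_
  simpa only [← hU.conjAd_add, neg_add_cancel, hU.conjAd_zero] using hle (-t) (conjAd U t a)

theorem inner_conjAd_apply (t : ℝ) (a : H →L[ℂ] H) (ξ η : H) :
    ⟪η, conjAd U t a ξ⟫ = ⟪U (-t) η, a (U (-t) ξ)⟫ :=
  hU.inner_apply_right t η _

theorem hasDerivAt_inner_conjAd_apply_zero (a : H →L[ℂ] H) (ξ η : D.domain) :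
    HasDerivAt (fun t => ⟪(η : H), conjAd U t a ξ⟫) (I * (⟪D η, a ξ⟫ - ⟪(η : H), a (D ξ)⟫)) 0 := by
  have hflow : ∀ ζ : D.domain, HasDerivAt (fun t => U (-t) ζ) (-(I • D ζ)) 0 := fun ζ => by
    simpa [Function.comp_def] using
      (hU.hasDerivAt ζ).scomp_of_eq (0 : ℝ) (hasDerivAt_neg 0) neg_zero.symm
  have ha : HasDerivAt (fun t => a (U (-t) ξ)) (a (-(I • D ξ))) 0 :=
    (a.restrictScalars ℝ).hasFDerivAt.comp_hasDerivAt 0 (hflow ξ)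
  simp only [hU.inner_conjAd_apply]
  refine ((hflow η).inner ℂ ha).congr_deriv ?_
  simp [hU.map_zero, inner_smul_left, inner_smul_right]
  ring

theorem isWeakDeriv_of_hasDerivAt {a d : H →L[ℂ] H}
    (hd : HasDerivAt (fun t => conjAd U t a) d 0) : IsWeakDeriv D a (-(I • d)) := by
  refine isWeakDeriv_iff.2 fun ξ η => ?_
  have hde := (hd.inner_apply ξ η).unique (hU.hasDerivAt_inner_conjAd_apply_zero a ξ η)
  simp only [neg_apply, smul_apply, inner_neg_right, inner_smul_right, hde]
  linear_combination (⟪(η : H), a (D ξ)⟫ - ⟪D η, a ξ⟫) * I_mul_I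

theorem hasDerivAt_inner_conjAd_apply {a b : H →L[ℂ] H} (hb : IsWeakDeriv D a b)
    (ξ η : D.domain) (s : ℝ) :
    HasDerivAt (fun t => ⟪(η : H), conjAd U t a ξ⟫) ⟪(η : H), conjAd U s (I • b) ξ⟫ s := by
  obtain ⟨ξ', hξ', -⟩ := hU.exists_domain_apply (-s) ξ
  obtain ⟨η', hη', -⟩ := hU.exists_domain_apply (-s) η
  have hshift : (fun t => ⟪(η : H), conjAd U t a ξ⟫)
      = fun t => ⟪(η' : H), conjAd U (t - s) a ξ'⟫ := by
    funext t
    simp only [hU.inner_conjAd_apply, hξ', hη', ← hU.add_apply]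
    ring_nf
  have h0 := hU.hasDerivAt_inner_conjAd_apply_zero a ξ' η'
  rw [← isWeakDeriv_iff.1 hb] at h0
  rw [hshift]
  refine (HasDerivAt.comp_sub_const s s (by simpa using h0)).congr_deriv ?_
  simp [hU.inner_conjAd_apply, hξ', hη']

theorem continuous_conjAd_of_hasDerivAt {a d : H →L[ℂ] H}
    (hd : HasDerivAt (fun t => conjAd U t a) d 0) : Continuous fun t => conjAd U t d :=
  continuous_orbit_of_hasDerivAt_zero (α := fun t => (conjAdL U t).restrictScalars ℝ)
    hU.conjAd_add hU.norm_conjAd hd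

end IsStoneGroupOf

end StoneGroup

/-- `a` is strongly `D`-differentiable (i.e. `t ↦ α_t(a)` is norm differentiable at `0`)
iff `a` is weakly `D`-differentiable and `t ↦ α_t(wD(a))` is norm continuous. -/
theorem strong_iff_weak_and_continuous
    (D : H →ₗ.[ℂ] H) (hD : IsSelfAdjoint D)
    (U : ℝ → H →L[ℂ] H) (hU : IsStoneGroupOf D U)
    (a : H →L[ℂ] H) :
    (∃ d : H →L[ℂ] H, HasDerivAt (fun t : ℝ => conjAd U t a) d 0) ↔
      (∃ b : H →L[ℂ] H, IsWeakDeriv D a b ∧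
        Continuous fun t : ℝ => conjAd U t b) := by
  constructor
  · rintro ⟨d, hd⟩
    refine ⟨-(I • d), hU.isWeakDeriv_of_hasDerivAt hd, ?_⟩
    simp only [conjAd_neg, conjAd_smul]
    exact ((hU.continuous_conjAd_of_hasDerivAt hd).const_smul I).neg
  · rintro ⟨b, hb, hcont⟩
    have hcont_smul : Continuous fun t => conjAd U t (I • b) := by
      simp only [conjAd_smul]
      exact hcont.const_smul I
    refine ⟨I • b, ?_⟩
    simpa only [hU.conjAd_zero] using
      hasDerivAt_of_hasDerivAt_inner_apply hD.dense_domain hcont_smul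
        (fun ξ hξ η hη => hU.hasDerivAt_inner_conjAd_apply hb ⟨ξ, hξ⟩ ⟨η, hη⟩) 0
end

section
/- Let D be a self-adjoint operator on H and a ∈ B(H) twice weakly D-differentiable (a is weakly D-differentiable and wD(a) is weakly D-differentiable). Then a is strongly D-differentiable, i.e., lim_{t→0} (e^{itD} a e^{-itD} − a)/(it) exists in operator norm and equals wD(a). -/
/-!
For `ξ, η ∈ dom D` the group `e^{-isD}` preserves `dom D`, so the weak derivative makes the matrix
coefficient `s ↦ ⟨α_s(a)ξ, η⟩` differentiable with derivative `-i⟨α_s(wD a)ξ, η⟩`. Applying this to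
`a` and to `b = wD a`, and using `‖α_s(c)‖ ≤ ‖c‖`, the mean value theorem gives
`|⟨(α_t(a) - a - it b)ξ, η⟩| ≤ ‖c‖ ‖ξ‖ ‖η‖ t²`. Since `dom D` is dense this is the operator-norm
bound `‖α_t(a) - a - it b‖ ≤ ‖c‖ t²`, which forces `i b` to be the norm derivative at `0`.
-/

open Complex Filter Topology MeasureTheory
open scoped Topology

local notation "⟪" x ", " y "⟫" => @inner ℂ _ _ x y

variable {H : Type*} [NormedAddCommGroup H] [InnerProductSpace ℂ H] [CompleteSpace H]

theorem hasDerivAt_of_norm_sub_sub_le_sq {F : Type*} [NormedAddCommGroup F] [NormedSpace ℝ F]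
    {f : ℝ → F} {f' : F} {x C : ℝ} (h : ∀ t, ‖f t - f x - (t - x) • f'‖ ≤ C * (t - x) ^ 2) :
    HasDerivAt f f' x := by
  rw [hasDerivAt_iff_isLittleO]
  have hsq : (fun t : ℝ => (t - x) ^ 2) =o[𝓝 x] fun t => t - x :=
    (Asymptotics.isLittleO_pow_id one_lt_two).comp_tendsto
      (tendsto_sub_nhds_zero_iff.mpr tendsto_id)
  refine (Asymptotics.IsBigO.of_bound C (Eventually.of_forall fun t => ?_)).trans_isLittleO hsq
  simpa [Real.norm_eq_abs, abs_of_nonneg (sq_nonneg (t - x))] using h t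

theorem norm_sub_sub_smul_le_of_norm_deriv2_le {F : Type*} [NormedAddCommGroup F]
    [NormedSpace ℝ F] {g g' g'' : ℝ → F} {C : ℝ} (hg : ∀ r, HasDerivAt g (g' r) r)
    (hg' : ∀ r, HasDerivAt g' (g'' r) r) (hC : ∀ r, ‖g'' r‖ ≤ C) (t : ℝ) :
    ‖g t - g 0 - t • g' 0‖ ≤ C * t ^ 2 := by
  have hg'_lip : ∀ r, ‖g' r - g' 0‖ ≤ C * |r| := fun r => by
    simpa [Real.norm_eq_abs] using convex_univ.norm_image_sub_le_of_norm_hasDerivWithin_le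
      (fun s _ => (hg' s).hasDerivWithinAt) (fun s _ => hC s) (Set.mem_univ 0) (Set.mem_univ r)
  have hC0 : 0 ≤ C := (norm_nonneg _).trans (hC 0)
  have hderiv : ∀ r ∈ Set.uIcc 0 t,
      HasDerivWithinAt (fun r => g r - r • g' 0) (g' r - g' 0) (Set.uIcc 0 t) r := fun r _ => by
    have := (hg r).sub ((hasDerivAt_id' r).smul_const (g' 0))
    rw [one_smul] at this
    exact this.hasDerivWithinAt
  have hbound : ∀ r ∈ Set.uIcc 0 t, ‖g' r - g' 0‖ ≤ C * |t| := fun r hr =>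
    (hg'_lip r).trans
      (mul_le_mul_of_nonneg_left (by simpa using Set.abs_sub_left_of_mem_uIcc hr) hC0)
  have := (convex_uIcc 0 t).norm_image_sub_le_of_norm_hasDerivWithin_le hderiv hbound
    Set.left_mem_uIcc Set.right_mem_uIcc
  rw [sub_right_comm]
  simpa [Real.norm_eq_abs, mul_assoc, ← sq] using this

theorem ContinuousLinearMap.opNorm_le_of_inner_le_of_dense {𝕜 E : Type*} [RCLike 𝕜]
    [NormedAddCommGroup E] [InnerProductSpace 𝕜 E] {T : E →L[𝕜] E} {s : Set E} (hs : Dense s)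
    {C : ℝ} (hC : 0 ≤ C) (h : ∀ x ∈ s, ∀ y ∈ s, ‖inner 𝕜 (T x) y‖ ≤ C * ‖x‖ * ‖y‖) : ‖T‖ ≤ C := by
  have hall : ∀ x y, ‖inner 𝕜 (T x) y‖ ≤ C * ‖x‖ * ‖y‖ := fun x y => by
    refine isClosed_property2 (p := fun x y => ‖inner 𝕜 (T x) y‖ ≤ C * ‖x‖ * ‖y‖)
      hs.denseRange_val (isClosed_le (by fun_prop) (by fun_prop)) (fun x y => h x x.2 y y.2) x y
  refine T.opNorm_le_of_re_inner_le hC fun x y hx hy => ?_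
  calc RCLike.re (inner 𝕜 (T x) y) ≤ ‖inner 𝕜 (T x) y‖ := RCLike.re_le_norm _
    _ ≤ C := by simpa [hx, hy] using hall x y

section

variable {E : Type*} [NormedAddCommGroup E] [InnerProductSpace ℂ E]
  {D : E →ₗ.[ℂ] E} {U : ℝ → E →L[ℂ] E}

namespace IsStoneGroupOf

theorem apply_apply_neg (hU : IsStoneGroupOf D U) (t : ℝ) (ξ : E) : U t (U (-t) ξ) = ξ := by
  simpa [hU.map_zero] using congr($(hU.map_add t (-t)) ξ).symm

theorem inner_apply_left (hU : IsStoneGroupOf D U) (t : ℝ) (ξ η : E) :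
    ⟪U t ξ, η⟫ = ⟪ξ, U (-t) η⟫ := by
  conv_lhs => rw [← hU.apply_apply_neg t η]
  exact LinearIsometry.inner_map_map ⟨(U t).toLinearMap, hU.isometry t⟩ ξ _

theorem norm_le_one (hU : IsStoneGroupOf D U) (t : ℝ) : ‖U t‖ ≤ 1 :=
  (U t).opNorm_le_bound zero_le_one fun ξ => by rw [hU.isometry, one_mul]

theorem hasDerivAt_apply (hU : IsStoneGroupOf D U) (ξ : D.domain) (t : ℝ) :
    HasDerivAt (fun s => U s (ξ : E)) (Complex.I • U t (D ξ)) t := by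
  have hshift := HasDerivAt.comp_sub_const t t (by rw [sub_self]; exact hU.hasDerivAt ξ)
  have := ((U t).restrictScalars ℝ).hasFDerivAt.comp_hasDerivAt t hshift
  convert this using 1
  · funext s
    simp [← ContinuousLinearMap.comp_apply, ← hU.map_add]
  · simp

theorem hasDerivAt_apply_apply (hU : IsStoneGroupOf D U) (ξ : D.domain) (t : ℝ) :
    HasDerivAt (fun s => U s (U t (ξ : E))) (Complex.I • U t (D ξ)) 0 := by
  have := HasDerivAt.comp_add_const 0 t (by rw [zero_add]; exact hU.hasDerivAt_apply ξ t)
  convert this using 2 with s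
  simp [← ContinuousLinearMap.comp_apply, ← hU.map_add]

theorem apply_mem_domain (hU : IsStoneGroupOf D U) (ξ : D.domain) (t : ℝ) :
    U t (ξ : E) ∈ D.domain :=
  hU.mem_domain _ _ (hU.hasDerivAt_apply_apply ξ t)

theorem domain_apply (hU : IsStoneGroupOf D U) (ξ : D.domain) (t : ℝ) :
    D ⟨U t (ξ : E), hU.apply_mem_domain ξ t⟩ = U t (D ξ) :=
  smul_right_injective E Complex.I_ne_zero
    ((hU.hasDerivAt ⟨_, hU.apply_mem_domain ξ t⟩).unique (hU.hasDerivAt_apply_apply ξ t))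

end IsStoneGroupOf

theorem conjAd_zero (hU : IsStoneGroupOf D U) (a : E →L[ℂ] E) : conjAd U 0 a = a := by
  ext ξ
  simp [conjAd, hU.map_zero]

theorem norm_conjAd_le (hU : IsStoneGroupOf D U) (t : ℝ) (a : E →L[ℂ] E) :
    ‖conjAd U t a‖ ≤ ‖a‖ :=
  calc ‖conjAd U t a‖ ≤ ‖U t‖ * (‖a‖ * ‖U (-t)‖) :=
        (ContinuousLinearMap.opNorm_comp_le _ _).trans
          (mul_le_mul_of_nonneg_left (ContinuousLinearMap.opNorm_comp_le _ _) (norm_nonneg _))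
    _ ≤ 1 * (‖a‖ * 1) := by gcongr <;> exact hU.norm_le_one _
    _ = ‖a‖ := by ring

theorem inner_conjAd_apply (hU : IsStoneGroupOf D U) (t : ℝ) (a : E →L[ℂ] E) (ξ η : E) :
    ⟪conjAd U t a ξ, η⟫ = ⟪a (U (-t) ξ), U (-t) η⟫ :=
  hU.inner_apply_left t _ η

theorem IsWeakDeriv.hasDerivAt_inner_conjAd (hU : IsStoneGroupOf D U) {a b : E →L[ℂ] E}
    (hw : IsWeakDeriv D a b) (ξ η : D.domain) (t : ℝ) :
    HasDerivAt (fun s => ⟪conjAd U s a ξ, η⟫) (-Complex.I * ⟪conjAd U t b ξ, η⟫) t := by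
  have hneg {ζ : D.domain} : HasDerivAt (fun s => U (-s) (ζ : E))
      (-(Complex.I • D ⟨U (-t) ζ, hU.apply_mem_domain ζ (-t)⟩)) t := by
    rw [hU.domain_apply]
    simpa [Function.comp_def] using (hU.hasDerivAt_apply ζ (-t)).scomp t (hasDerivAt_neg t)
  have hform := hw ⟨_, hU.apply_mem_domain ξ (-t)⟩ ⟨_, hU.apply_mem_domain η (-t)⟩
  simp only [inner_conjAd_apply hU]
  refine (((a.restrictScalars ℝ).hasFDerivAt.comp_hasDerivAt t hneg).inner ℂ hneg).congr_deriv ?_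
  simp only [Function.comp_apply, ContinuousLinearMap.coe_restrictScalars', map_neg,
    _root_.map_smul, inner_neg_left, inner_neg_right, inner_smul_left, inner_smul_right,
    Complex.conj_I] at hform ⊢
  rw [hform]
  ring

theorem norm_inner_conjAd_apply_le (hU : IsStoneGroupOf D U) (t : ℝ) (a : E →L[ℂ] E) (ξ η : E) :
    ‖⟪conjAd U t a ξ, η⟫‖ ≤ ‖a‖ * ‖ξ‖ * ‖η‖ :=
  calc ‖⟪conjAd U t a ξ, η⟫‖ ≤ ‖conjAd U t a‖ * ‖ξ‖ * ‖η‖ :=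
        (norm_inner_le_norm _ _).trans (by gcongr; exact (conjAd U t a).le_opNorm ξ)
    _ ≤ ‖a‖ * ‖ξ‖ * ‖η‖ := by gcongr; exact norm_conjAd_le hU t a

theorem norm_inner_conjAd_sub_sub_le (hU : IsStoneGroupOf D U) {a b c : E →L[ℂ] E}
    (hw1 : IsWeakDeriv D a b) (hw2 : IsWeakDeriv D b c) (ξ η : D.domain) (t : ℝ) :
    ‖⟪(conjAd U t a - a - t • (Complex.I • b)) ξ, η⟫‖ ≤ ‖c‖ * ‖(ξ : E)‖ * ‖(η : E)‖ * t ^ 2 := by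
  have htaylor := norm_sub_sub_smul_le_of_norm_deriv2_le (hw1.hasDerivAt_inner_conjAd hU ξ η)
    (fun r => (hw2.hasDerivAt_inner_conjAd hU ξ η r).const_mul (-Complex.I))
    (fun r => by simpa using norm_inner_conjAd_apply_le hU r c ξ η) t
  have hcoeff : ⟪(conjAd U t a - a - t • (Complex.I • b)) ξ, η⟫ =
      ⟪conjAd U t a ξ, η⟫ - ⟪a ξ, η⟫ - t • (-Complex.I * ⟪b ξ, η⟫) := by
    simp [← Complex.coe_smul]
    ring
  rw [hcoeff]
  simpa only [conjAd_zero hU] using htaylor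

theorem norm_conjAd_sub_sub_le (hU : IsStoneGroupOf D U) (hdense : Dense (D.domain : Set E))
    {a b c : E →L[ℂ] E} (hw1 : IsWeakDeriv D a b) (hw2 : IsWeakDeriv D b c) (t : ℝ) :
    ‖conjAd U t a - a - t • (Complex.I • b)‖ ≤ ‖c‖ * t ^ 2 :=
  ContinuousLinearMap.opNorm_le_of_inner_le_of_dense hdense (by positivity) fun ξ hξ η hη =>
    (norm_inner_conjAd_sub_sub_le hU hw1 hw2 ⟨ξ, hξ⟩ ⟨η, hη⟩ t).trans_eq (by ring)

end

/-- If `a` is twice weakly `D`-differentiable then `a` is strongly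
`D`-differentiable: `(α_t(a) − a)/(it) → wD(a)` in operator norm, i.e.
`t ↦ α_t(a)` has norm derivative `i wD(a)` at `0`. -/
theorem strongly_differentiable_of_twice_weakly
    (D : H →ₗ.[ℂ] H) (hD : IsSelfAdjoint D)
    (U : ℝ → H →L[ℂ] H) (hU : IsStoneGroupOf D U)
    (a b c : H →L[ℂ] H)
    (hw1 : IsWeakDeriv D a b) (hw2 : IsWeakDeriv D b c) :
    HasDerivAt (fun t : ℝ => conjAd U t a) (Complex.I • b) 0 :=
  hasDerivAt_of_norm_sub_sub_le_sq fun t => by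
    simpa [conjAd_zero hU] using norm_conjAd_sub_sub_le hU hD.dense_domain hw1 hw2 t
end
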